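/- arXiv:2412.10108 — 12 statements merged into one kernel-verified Lean document; each statement's English description precedes it below -/
import Mathlib

section
/- Let ε > 0, a > 0, b > 0, c > 0 and n ≥ 1 be a natural number. Define Gₙ : (−ε(nπ/c)², ε(nπ/c)²) → ℝ by Gₙ(λ) = ε·√((nπ/c)² + λ/ε)/tanh(b·√((nπ/c)² + λ/ε)) − ε·√((nπ/c)² − λ/ε)/tanh(a·√((nπ/c)² − λ/ε)). Then Gₙ is strictly increasing on the interval (−ε(nπ/c)², ε(nπ/c)²). -/
open Real

lemma monoF : StrictMonoOn (fun x : ℝ => x * Real.cosh x / Real.sinh x) (Set.Ioi 0) := by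
  apply strictMonoOn_of_deriv_pos (convex_Ioi 0)
  · apply ContinuousOn.div
    · fun_prop
    · fun_prop
    · intro x hx
      exact ne_of_gt (Real.sinh_pos_iff.2 hx)
  · intro x hx
    rw [interior_Ioi] at hx
    have hs : Real.sinh x ≠ 0 := ne_of_gt (Real.sinh_pos_iff.2 hx)
    have hd : HasDerivAt (fun x : ℝ => x * Real.cosh x / Real.sinh x)
        (((1 * Real.cosh x + x * Real.sinh x) * Real.sinh x -
          x * Real.cosh x * Real.cosh x) / Real.sinh x ^ 2) x :=
      ((hasDerivAt_id x).mul (Real.hasDerivAt_cosh x)).div (Real.hasDerivAt_sinh x) hs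
    rw [hd.deriv]
    apply div_pos
    · have h1 : Real.cosh x ^ 2 - Real.sinh x ^ 2 = 1 := Real.cosh_sq_sub_sinh_sq x
      have h2 : x < Real.sinh x := Real.self_lt_sinh_iff.2 hx
      have h3 : (1:ℝ) ≤ Real.cosh x := Real.one_le_cosh x
      have h4 : Real.sinh x ≤ Real.sinh x * Real.cosh x :=
        le_mul_of_one_le_right (le_of_lt (Real.sinh_pos_iff.2 hx)) h3
      have h5 : (1 * Real.cosh x + x * Real.sinh x) * Real.sinh x -
          x * Real.cosh x * Real.cosh x = Real.sinh x * Real.cosh x - x := by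
        linear_combination (-x) * h1
      linarith
    · positivity

lemma key (m : ℝ) (hm : 0 < m) {x y : ℝ} (hx : 0 < x) (hxy : x < y) :
    x / Real.tanh (m * x) < y / Real.tanh (m * y) := by
  have hy : 0 < y := hx.trans hxy
  have hmx : 0 < m * x := mul_pos hm hx
  have hmy : 0 < m * y := mul_pos hm hy
  have h := monoF hmx (Set.mem_Ioi.2 hmy) (by nlinarith)
  have e : ∀ z : ℝ, 0 < z → z / Real.tanh (m * z)
      = (1 / m) * ((m * z) * Real.cosh (m * z) / Real.sinh (m * z)) := by
    intro z hz
    rw [Real.tanh_eq_sinh_div_cosh]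
    have hc : Real.cosh (m * z) ≠ 0 := ne_of_gt (Real.cosh_pos _)
    field_simp
  rw [e x hx, e y hy]
  exact mul_lt_mul_of_pos_left h (by positivity)

/-- The difference of reciprocals of the two sides of the flat
characteristic equation (with ε₊ = ε₋ = ε) is strictly increasing on
(−ε(nπ/c)², ε(nπ/c)²). -/
theorem stmt_1 (ε a b c : ℝ) (hε : 0 < ε) (ha : 0 < a) (hb : 0 < b) (hc : 0 < c)
    (n : ℕ) (hn : 1 ≤ n) :
    StrictMonoOn
      (fun lam : ℝ =>
        ε * Real.sqrt (((n : ℝ) * π / c) ^ 2 + lam / ε) /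
            Real.tanh (b * Real.sqrt (((n : ℝ) * π / c) ^ 2 + lam / ε))
          - ε * Real.sqrt (((n : ℝ) * π / c) ^ 2 - lam / ε) /
            Real.tanh (a * Real.sqrt (((n : ℝ) * π / c) ^ 2 - lam / ε)))
      (Set.Ioo (-(ε * ((n : ℝ) * π / c) ^ 2)) (ε * ((n : ℝ) * π / c) ^ 2)) := by
  set K : ℝ := ((n : ℝ) * π / c) ^ 2 with hK
  intro x hx y hy hxy
  obtain ⟨hx1, hx2⟩ := hx
  obtain ⟨hy1, hy2⟩ := hy
  have hxp : 0 < K + x / ε := by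
    have : -K < x / ε := by
      rw [lt_div_iff₀ hε]; nlinarith
    linarith
  have hyp : 0 < K + y / ε := by
    have : -K < y / ε := by
      rw [lt_div_iff₀ hε]; nlinarith
    linarith
  have hxm : 0 < K - x / ε := by
    have : x / ε < K := by
      rw [div_lt_iff₀ hε]; nlinarith
    linarith
  have hym : 0 < K - y / ε := by
    have : y / ε < K := by
      rw [div_lt_iff₀ hε]; nlinarith
    linarith
  have hdiv : x / ε < y / ε := by gcongr
  have s1 : Real.sqrt (K + x / ε) < Real.sqrt (K + y / ε) :=
    Real.sqrt_lt_sqrt hxp.le (by linarith)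
  have s1p : 0 < Real.sqrt (K + x / ε) := Real.sqrt_pos.2 hxp
  have s2 : Real.sqrt (K - y / ε) < Real.sqrt (K - x / ε) :=
    Real.sqrt_lt_sqrt hym.le (by linarith)
  have s2p : 0 < Real.sqrt (K - y / ε) := Real.sqrt_pos.2 hym
  have t1 := key b hb s1p s1
  have t2 := key a ha s2p s2
  simp only
  rw [mul_div_assoc, mul_div_assoc, mul_div_assoc, mul_div_assoc]
  exact sub_lt_sub (mul_lt_mul_of_pos_left t1 hε) (mul_lt_mul_of_pos_left t2 hε)
end

section
/- Let ε > 0, a > 0, b > 0, c > 0 and let (αₙ)_{n≥1} be a sequence with αₙ ∈ (0,1) for every n, satisfying for every n ≥ 1 the rescaled characteristic equation tanh(a·(nπ/c)·√(1−αₙ))/√(1−αₙ) = tanh(b·(nπ/c)·√(1+αₙ))/√(1+αₙ). Then n·√(1−αₙ) → +∞ and αₙ → 0 as n → ∞. -/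
/-!
Write `x = √(1 - α)`, `y = √(1 + α) ≥ 1` and `A = a n π / c`. Since `tanh ≤ 1`, the right-hand
side of the characteristic equation is at most `1`, so `tanh (A x) ≤ x`. The elementary bound
`t / (1 + t) ≤ tanh t` then gives `1 - x ≤ 1 / A`, hence `x → 1` as `A → ∞`, so that `n x → ∞`
and `α = 1 - x² → 0`.
-/

open Real Filter Topology

namespace Real

/-- Since `cosh t - sinh t = exp (-t) ≤ 1` and `t ≤ sinh t`. -/
theorem div_one_add_le_tanh {t : ℝ} (ht : 0 ≤ t) : t / (1 + t) ≤ tanh t := by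
  have hexp : t * exp (-t) ≤ t := mul_le_of_le_one_right ht (exp_le_one_iff.2 (by linarith))
  have hsinh : t ≤ sinh t := self_le_sinh_iff.2 ht
  rw [tanh_eq_sinh_div_cosh, div_le_div_iff₀ (by linarith) (cosh_pos t), ← cosh_sub_sinh] at *
  nlinarith

theorem one_sub_le_inv_of_tanh_mul_le {A x : ℝ} (hA : 0 < A) (hx : 0 < x)
    (h : tanh (A * x) ≤ x) : 1 - x ≤ A⁻¹ := by
  have hAx : 0 ≤ A * x := by positivity
  have h' : A * x ≤ x * (1 + A * x) :=
    (div_le_iff₀ (by linarith)).1 ((div_one_add_le_tanh hAx).trans h)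
  rw [← one_div, le_div_iff₀ hA]
  nlinarith

end Real

theorem one_sub_sqrt_le_inv_of_char_eq {A B α : ℝ} (hA : 0 < A) (hα : α ∈ Set.Ioo (0 : ℝ) 1)
    (heq : tanh (A * √(1 - α)) / √(1 - α) = tanh (B * √(1 + α)) / √(1 + α)) :
    1 - √(1 - α) ≤ A⁻¹ := by
  have hx : 0 < √(1 - α) := sqrt_pos.2 (by linarith [hα.2])
  have hy : 1 ≤ √(1 + α) := one_le_sqrt.2 (by linarith [hα.1])
  have hrhs : tanh (B * √(1 + α)) / √(1 + α) ≤ 1 :=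
    (div_le_one (by linarith)).2 ((tanh_lt_one _).le.trans hy)
  exact one_sub_le_inv_of_tanh_mul_le hA hx ((div_le_one hx).1 (heq ▸ hrhs))

theorem stmt_2_general (a b c : ℝ) (ha : 0 < a) (hc : 0 < c)
    (α : ℕ → ℝ)
    (hmem : ∀ n : ℕ, 1 ≤ n → α n ∈ Set.Ioo (0 : ℝ) 1)
    (heq : ∀ n : ℕ, 1 ≤ n →
      Real.tanh (a * ((n : ℝ) * π / c) * Real.sqrt (1 - α n)) / Real.sqrt (1 - α n)
        = Real.tanh (b * ((n : ℝ) * π / c) * Real.sqrt (1 + α n)) / Real.sqrt (1 + α n)) :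
    Tendsto (fun n : ℕ => (n : ℝ) * Real.sqrt (1 - α n)) atTop atTop ∧
    Tendsto α atTop (nhds 0) := by
  have hA : Tendsto (fun n : ℕ => a * ((n : ℝ) * π / c)) atTop atTop := by
    simpa only [mul_div_assoc, mul_left_comm a] using
      tendsto_natCast_atTop_atTop.atTop_mul_const (by positivity : 0 < a * (π / c))
  have hx : Tendsto (fun n => √(1 - α n)) atTop (𝓝 1) := by
    have hlower : Tendsto (fun n : ℕ => 1 - (a * ((n : ℝ) * π / c))⁻¹) atTop (𝓝 1) := by
      simpa using tendsto_const_nhds.sub hA.inv_tendsto_atTop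
    refine tendsto_of_tendsto_of_tendsto_of_le_of_le' hlower tendsto_const_nhds ?_ ?_
    · filter_upwards [eventually_ge_atTop 1, hA.eventually_gt_atTop 0] with n hn hAn
      linarith [one_sub_sqrt_le_inv_of_char_eq hAn (hmem n hn) (heq n hn)]
    · filter_upwards [eventually_ge_atTop 1] with n hn
      exact sqrt_le_one.2 (by linarith [(hmem n hn).1])
  refine ⟨tendsto_natCast_atTop_atTop.atTop_mul_pos one_pos hx, ?_⟩
  have hsq : ∀ᶠ n in atTop, 1 - √(1 - α n) ^ 2 = α n := by
    filter_upwards [eventually_ge_atTop 1] with n hn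
    rw [sq_sqrt (by linarith [(hmem n hn).2])]
    ring
  simpa using (tendsto_const_nhds.sub (hx.pow 2)).congr' hsq

/-- If αₙ ∈ (0,1) satisfies the rescaled characteristic equation
tanh(a(nπ/c)√(1−αₙ))/√(1−αₙ) = tanh(b(nπ/c)√(1+αₙ))/√(1+αₙ) for all n ≥ 1, then
n√(1−αₙ) → +∞ and αₙ → 0. -/
theorem stmt_2 (ε a b c : ℝ) (hε : 0 < ε) (ha : 0 < a) (hb : 0 < b) (hc : 0 < c)
    (α : ℕ → ℝ)
    (hmem : ∀ n : ℕ, 1 ≤ n → α n ∈ Set.Ioo (0 : ℝ) 1)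
    (heq : ∀ n : ℕ, 1 ≤ n →
      Real.tanh (a * ((n : ℝ) * π / c) * Real.sqrt (1 - α n)) / Real.sqrt (1 - α n)
        = Real.tanh (b * ((n : ℝ) * π / c) * Real.sqrt (1 + α n)) / Real.sqrt (1 + α n)) :
    Tendsto (fun n : ℕ => (n : ℝ) * Real.sqrt (1 - α n)) atTop atTop ∧
    Tendsto α atTop (nhds 0) :=
  stmt_2_general a b c ha hc α hmem heq
end

section
/- Let ε > 0, c > 0 and 0 < a < b. For each natural number n ≥ 1 let λₙ ∈ (0, ε(nπ/c)²) satisfy the flat characteristic equation tanh(a·√((nπ/c)² − λₙ/ε))/√((nπ/c)² − λₙ/ε) = tanh(b·√((nπ/c)² + λₙ/ε))/√((nπ/c)² + λₙ/ε). Then λₙ·exp(n·π·a/c) → 0 as n → ∞; that is, λₙ = o(exp(−(nπ/c)·min{a,b})). -/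
open Real Filter

/-- tanh is bounded by 1. -/
lemma aux_tanh_lt_one (x : ℝ) : Real.tanh x < 1 := by
  rw [Real.tanh_eq_sinh_div_cosh]
  exact (div_lt_one (Real.cosh_pos x)).mpr (Real.sinh_lt_cosh x)

/-- tanh is monotone. -/
lemma aux_tanh_mono {u v : ℝ} (h : u ≤ v) : Real.tanh u ≤ Real.tanh v := by
  rw [Real.tanh_eq_sinh_div_cosh, Real.tanh_eq_sinh_div_cosh,
    div_le_div_iff₀ (Real.cosh_pos u) (Real.cosh_pos v)]
  have h1 : 0 ≤ Real.sinh (v - u) := Real.sinh_nonneg_iff.mpr (sub_nonneg.mpr h)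
  rw [Real.sinh_sub] at h1
  nlinarith [Real.cosh_pos u, Real.cosh_pos v]

/-- lower bound on tanh. -/
lemma aux_tanh_ge (x : ℝ) (hx : 0 ≤ x) : x / (1 + x) ≤ Real.tanh x := by
  rw [Real.tanh_eq_sinh_div_cosh, Real.sinh_eq, Real.cosh_eq,
    div_le_div_iff₀ (by linarith) (by positivity)]
  have h1 : 2 * x + 1 ≤ Real.exp (2 * x) := by
    have := Real.add_one_le_exp (2 * x); linarith
  have h2 : Real.exp (2 * x) = Real.exp x * Real.exp x := by
    rw [← Real.exp_add]; ring_nf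
  have h3 : Real.exp (-x) * Real.exp x = 1 := by
    rw [← Real.exp_add]; simp
  nlinarith [Real.exp_pos x, Real.exp_pos (-x),
    mul_le_mul_of_nonneg_right h1 (Real.exp_pos (-x)).le]

/-- lower bound on sinh. -/
lemma aux_sinh_ge (y : ℝ) (hy : 1 ≤ y) : Real.exp y / 4 ≤ Real.sinh y := by
  rw [Real.sinh_eq]
  have h1 : Real.exp (-y) ≤ 1 := by
    rw [← Real.exp_zero]; exact Real.exp_le_exp.mpr (by linarith)
  have h2 : 2 ≤ Real.exp y := by
    have := Real.add_one_le_exp 1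
    have := Real.exp_le_exp.mpr hy
    linarith
  linarith

set_option maxHeartbeats 1000000 in
/-- For critical contrast ε₊ = ε₋ = ε and 0 < a < b, the positive roots
λₙ ∈ (0, ε(nπ/c)²) of the flat characteristic equation satisfy
λₙ·exp(nπa/c) → 0, i.e. λₙ = o(exp(−(nπ/c)·min{a,b})). -/
theorem stmt_4 (ε a b c : ℝ) (hε : 0 < ε) (hc : 0 < c) (ha : 0 < a) (hab : a < b)
    (lam : ℕ → ℝ)
    (hmem : ∀ n : ℕ, 1 ≤ n → lam n ∈ Set.Ioo (0 : ℝ) (ε * ((n : ℝ) * π / c) ^ 2))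
    (heq : ∀ n : ℕ, 1 ≤ n →
      Real.tanh (a * Real.sqrt (((n : ℝ) * π / c) ^ 2 - lam n / ε)) /
          Real.sqrt (((n : ℝ) * π / c) ^ 2 - lam n / ε)
        = Real.tanh (b * Real.sqrt (((n : ℝ) * π / c) ^ 2 + lam n / ε)) /
          Real.sqrt (((n : ℝ) * π / c) ^ 2 + lam n / ε)) :
    Tendsto (fun n : ℕ => lam n * Real.exp ((n : ℝ) * π * a / c)) atTop (nhds 0) := by
  have hπ := Real.pi_pos
  set C : ℝ := 16 * Real.exp 4 * ε with hC
  have hCpos : 0 < C := by positivity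
  -- K n = nπ/c tends to infinity
  have hK : Tendsto (fun n : ℕ => (n : ℝ) * π / c) atTop atTop := by
    apply Tendsto.atTop_div_const hc
    exact Tendsto.atTop_mul_const hπ tendsto_natCast_atTop_atTop
  -- the majorant tends to zero
  have hmaj : Tendsto (fun n : ℕ =>
      C * (((n : ℝ) * π / c) ^ 2 * Real.exp (-(a * ((n : ℝ) * π / c))))) atTop (nhds 0) := by
    have base : Tendsto (fun x : ℝ => x ^ 2 * Real.exp (-x)) atTop (nhds 0) :=
      tendsto_pow_mul_exp_neg_atTop_nhds_zero 2
    have hax : Tendsto (fun x : ℝ => a * x) atTop atTop := by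
      simpa [mul_comm] using (Tendsto.atTop_mul_const ha (tendsto_id : Tendsto (fun x : ℝ => x) atTop atTop))
    have comp1 : Tendsto (fun x : ℝ => (a * x) ^ 2 * Real.exp (-(a * x))) atTop (nhds 0) :=
      base.comp hax
    have comp2 : Tendsto (fun x : ℝ =>
        C * (x ^ 2 * Real.exp (-(a * x)))) atTop (nhds 0) := by
      have := comp1.const_mul (C / a ^ 2)
      rw [mul_zero] at this
      refine this.congr fun x => ?_
      field_simp
    exact comp2.comp hK
  -- squeeze
  apply squeeze_zero' (g := fun n : ℕ =>
    C * (((n : ℝ) * π / c) ^ 2 * Real.exp (-(a * ((n : ℝ) * π / c)))))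
  · filter_upwards [eventually_ge_atTop 1] with n hn
    have h := hmem n hn
    have := Real.exp_pos ((n : ℝ) * π * a / c)
    nlinarith [h.1]
  · filter_upwards [eventually_ge_atTop 1, hK.eventually_ge_atTop (3 / a)] with n hn hk
    -- notation
    set k : ℝ := (n : ℝ) * π / c with hkdef
    have hk0 : 0 < k := lt_of_lt_of_le (by positivity) hk
    obtain ⟨hl0, hlu⟩ := hmem n hn
    set μ : ℝ := lam n / ε with hμdef
    have hμ0 : 0 < μ := div_pos hl0 hε
    have hμk : μ < k ^ 2 := by
      rw [hμdef, div_lt_iff₀ hε]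
      linarith [hlu]
    set s : ℝ := Real.sqrt (k ^ 2 - μ) with hsdef
    set t : ℝ := Real.sqrt (k ^ 2 + μ) with htdef
    have hs2 : s ^ 2 = k ^ 2 - μ := Real.sq_sqrt (by linarith)
    have ht2 : t ^ 2 = k ^ 2 + μ := Real.sq_sqrt (by nlinarith)
    have hs0 : 0 < s := Real.sqrt_pos.mpr (by linarith)
    have ht0 : 0 < t := Real.sqrt_pos.mpr (by nlinarith)
    have hsk : s ≤ k := by nlinarith
    have hkt : k < t := by nlinarith
    have heqn := heq n hn
    rw [← hkdef, ← hμdef, ← hsdef, ← htdef] at heqn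
    clear_value k μ s t
    -- RHS ≤ 1/t
    have hrhs : Real.tanh (b * t) / t ≤ 1 / t := by
      gcongr
      exact (aux_tanh_lt_one _).le
    -- LHS lower bound
    have hlhs : a / (1 + a * k) ≤ Real.tanh (a * s) / s := by
      have h1 : (a * s) / (1 + a * s) ≤ Real.tanh (a * s) := aux_tanh_ge _ (by positivity)
      have hden : (1 : ℝ) + a * s ≠ 0 := by positivity
      have h2 : a / (1 + a * s) = (a * s / (1 + a * s)) / s := by
        field_simp
      have h3 : a / (1 + a * k) ≤ a / (1 + a * s) := by
        gcongr
      refine h3.trans ?_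
      rw [h2]
      gcongr
    -- t is at most (1+ak)/a
    have hchain : a / (1 + a * k) ≤ 1 / t := by
      calc a / (1 + a * k) ≤ Real.tanh (a * s) / s := hlhs
        _ = Real.tanh (b * t) / t := heqn
        _ ≤ 1 / t := hrhs
    have ht_le : t ≤ (1 + a * k) / a := by
      rw [div_le_div_iff₀ (by positivity) ht0] at hchain
      rw [le_div_iff₀ ha]
      nlinarith
    -- crude bound on μ
    have hainv : a * (1 / a) = 1 := mul_one_div_cancel ha.ne'
    have hμ_le : μ ≤ 2 * k * (1 / a) + (1 / a) ^ 2 := by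
      have hsq : t * t ≤ ((1 + a * k) / a) * ((1 + a * k) / a) :=
        mul_self_le_mul_self ht0.le ht_le
      have hval : (1 + a * k) / a = 1 / a + k := by
        rw [add_div, mul_div_cancel_left₀ _ ha.ne']
      rw [hval] at hsq
      nlinarith [ht2]
    -- hence s ≥ k - 2/a
    have hk3 : 3 * (1 / a) ≤ k := by
      have : 3 / a = 3 * (1 / a) := by ring
      linarith [this ▸ hk]
    have hs_ge : k - 2 * (1 / a) ≤ s := by
      have hpos : 0 ≤ k - 2 * (1 / a) := by
        have : 0 < 1 / a := by positivity
        linarith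
      have h1 : (k - 2 * (1 / a)) ^ 2 ≤ s ^ 2 := by
        rw [hs2]
        have h5 : 2 * k * (1 / a) + (1 / a) ^ 2 ≤ 4 * k * (1 / a) - 4 * (1 / a) ^ 2 := by
          nlinarith [mul_le_mul_of_nonneg_left hk3 (le_of_lt (show (0:ℝ) < 1 / a by positivity))]
        nlinarith
      nlinarith
    -- refined: tanh (a k - 2) ≤ tanh (a s)
    set y : ℝ := a * k - 2 with hydef
    clear_value y
    have hy1 : 1 ≤ y := by
      have := mul_le_mul_of_nonneg_left hk3 ha.le
      rw [hydef]
      nlinarith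
    have has_ge : y ≤ a * s := by
      have := mul_le_mul_of_nonneg_left hs_ge ha.le
      rw [hydef]
      nlinarith
    have htanh : Real.tanh y ≤ Real.tanh (a * s) := aux_tanh_mono has_ge
    have hty_pos : 0 < Real.tanh y := by
      rw [Real.tanh_eq_sinh_div_cosh]
      exact div_pos (Real.sinh_pos_iff.mpr (by linarith)) (Real.cosh_pos y)
    -- tanh y / k ≤ 1 / t
    have hchain2 : Real.tanh y / k ≤ 1 / t := by
      calc Real.tanh y / k ≤ Real.tanh (a * s) / s :=
            div_le_div₀ (by linarith [htanh, hty_pos]) htanh hs0 hsk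
        _ = Real.tanh (b * t) / t := heqn
        _ ≤ 1 / t := hrhs
    have httanh : t * Real.tanh y ≤ k := by
      rw [div_le_div_iff₀ hk0 ht0] at hchain2
      nlinarith
    -- μ sinh² y ≤ k²
    have hS0 : 0 < Real.sinh y := Real.sinh_pos_iff.mpr (by linarith)
    have hμS : μ * Real.sinh y ^ 2 ≤ k ^ 2 := by
      have hsq : (t * Real.tanh y) ^ 2 ≤ k ^ 2 := by
        rw [pow_two, pow_two]
        exact mul_self_le_mul_self (by positivity) httanh
      have hch : Real.cosh y ^ 2 = 1 + Real.sinh y ^ 2 := Real.cosh_sq' y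
      have hchpos := Real.cosh_pos y
      have hch2 : (0:ℝ) < Real.cosh y ^ 2 := by positivity
      have h2 : Real.tanh y ^ 2 = Real.sinh y ^ 2 / Real.cosh y ^ 2 := by
        rw [Real.tanh_eq_sinh_div_cosh, div_pow]
      rw [mul_pow, h2] at hsq
      have h3 : t ^ 2 * Real.sinh y ^ 2 ≤ k ^ 2 * Real.cosh y ^ 2 := by
        calc t ^ 2 * Real.sinh y ^ 2
            = (t ^ 2 * (Real.sinh y ^ 2 / Real.cosh y ^ 2)) * Real.cosh y ^ 2 := by
              field_simp
          _ ≤ k ^ 2 * Real.cosh y ^ 2 := mul_le_mul_of_nonneg_right hsq hch2.le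
      have key : (k ^ 2 + μ) * Real.sinh y ^ 2 ≤ k ^ 2 * (1 + Real.sinh y ^ 2) := by
        rw [← ht2, ← hch]
        exact h3
      linarith [key]
    -- sinh lower bound
    have hμfin : μ ≤ 16 * k ^ 2 * Real.exp (-(2 * y)) := by
      have hS := aux_sinh_ge y hy1
      have hSS : Real.exp y / 4 * (Real.exp y / 4) ≤ Real.sinh y * Real.sinh y :=
        mul_self_le_mul_self (by positivity) hS
      have hE : Real.exp y * Real.exp y = Real.exp (2 * y) := by
        rw [← Real.exp_add]; ring_nf
      have h4 : μ * (Real.exp y / 4 * (Real.exp y / 4)) ≤ μ * (Real.sinh y * Real.sinh y) :=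
        mul_le_mul_of_nonneg_left hSS hμ0.le
      have hE' : μ * (Real.exp y * Real.exp y) = μ * Real.exp (2 * y) := by rw [hE]
      rw [Real.exp_neg, ← div_eq_mul_inv, le_div_iff₀ (Real.exp_pos _)]
      linarith [h4, hμS, hE']
    -- conclude
    have hlam : lam n = ε * μ := by
      rw [hμdef]; field_simp
    have hexp : (n : ℝ) * π * a / c = a * k := by rw [hkdef]; ring
    rw [hlam, hexp]
    have e1 : Real.exp (-(2 * y)) * Real.exp (a * k) = Real.exp 4 * Real.exp (-(a * k)) := by
      rw [← Real.exp_add, ← Real.exp_add]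
      congr 1
      rw [hydef]; ring
    calc ε * μ * Real.exp (a * k)
        ≤ ε * (16 * k ^ 2 * Real.exp (-(2 * y))) * Real.exp (a * k) := by
          gcongr
      _ = C * (k ^ 2 * Real.exp (-(a * k))) := by
          rw [hC]
          linear_combination (16 * ε * k ^ 2) * e1
  · exact hmaj
end

section
/- Let ε₊ > 0, ε₋ > 0, a > 0, b > 0, c > 0, and let n₀ be a natural number. Suppose (λₙ)_{n≥1} is a real sequence such that for all n > n₀ one has λₙ ∈ (−ε₋(nπ/c)², ε₊(nπ/c)²) and λₙ satisfies the flat characteristic equation tanh(a·√((nπ/c)² − λₙ/ε₊))/(ε₊·√((nπ/c)² − λₙ/ε₊)) = tanh(b·√((nπ/c)² + λₙ/ε₋))/(ε₋·√((nπ/c)² + λₙ/ε₋)), and that λₙ converges to some finite Λ ∈ ℝ. Then ε₊ = ε₋. -/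
open Real Filter Topology Asymptotics

/-! As `n → ∞` the bounded `λₙ` are negligible against `(nπ/c)²`, so the two square roots
`tₙ, sₙ` are asymptotically equivalent and tend to `∞`, and both `tanh` factors tend to `1`.
Multiplied by `tₙ`, the left side of the characteristic equation then tends to `1/ε₊` and the
right side to `1/ε₋`. -/

lemma Real.tendsto_cosh_atTop : Tendsto cosh atTop atTop :=
  tendsto_atTop_mono (fun x => by rw [cosh_eq]; linarith [exp_pos (-x)])
    (tendsto_exp_atTop.atTop_div_const two_pos)

lemma Real.tendsto_tanh_atTop : Tendsto tanh atTop (𝓝 1) := by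
  have h : Tendsto (fun x => 1 - exp (-x) / cosh x) atTop (𝓝 (1 - 0)) :=
    tendsto_const_nhds.sub (tendsto_exp_neg_atTop_nhds_zero.div_atTop tendsto_cosh_atTop)
  rw [sub_zero] at h
  refine h.congr fun x => ?_
  rw [tanh_eq_sinh_div_cosh, ← cosh_sub_sinh, sub_div, div_self (cosh_pos x).ne', sub_sub_cancel]

lemma tendsto_mul_tanh_mul_div_mul {ε a : ℝ} (hε : ε ≠ 0) (ha : 0 < a) :
    Tendsto (fun μ => μ * (tanh (a * μ) / (ε * μ))) atTop (𝓝 ε⁻¹) := by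
  have h := (tendsto_tanh_atTop.comp (tendsto_id.const_mul_atTop ha)).div_const ε
  rw [one_div] at h
  refine h.congr' ?_
  filter_upwards [eventually_ne_atTop 0] with μ hμ
  field_simp
  rfl

lemma Filter.Tendsto.isLittleO_of_tendsto_atTop {α : Type*} {l : Filter α} {u k : α → ℝ} {U : ℝ}
    (hu : Tendsto u l (𝓝 U)) (hk : Tendsto k l atTop) : u =o[l] k :=
  (hu.isBigO_one ℝ).trans_isLittleO
    ((isLittleO_one_left_iff ℝ).2 (tendsto_norm_atTop_atTop.comp hk))

lemma Asymptotics.IsEquivalent.tendsto_sqrt_div_sqrt {α : Type*} {l : Filter α} {u v : α → ℝ}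
    (h : u ~[l] v) (hv : Tendsto v l atTop) :
    Tendsto (fun x => √(u x) / √(v x)) l (𝓝 1) := by
  have hpos := hv.eventually_gt_atTop 0
  have hdiv := (isEquivalent_iff_tendsto_one (hpos.mono fun _ hx => hx.ne')).1 h
  have hsqrt := (continuous_sqrt.tendsto 1).comp hdiv
  rw [sqrt_one] at hsqrt
  refine hsqrt.congr' ?_
  filter_upwards [hpos] with x hx
  exact sqrt_div' _ hx.le

theorem stmt_5_general (εp εm a b c : ℝ) (hεp : 0 < εp) (hεm : 0 < εm)
    (ha : 0 < a) (hb : 0 < b) (hc : 0 < c) (n₀ : ℕ)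
    (lam : ℕ → ℝ) (Λ : ℝ)
    (heq : ∀ n : ℕ, n₀ < n →
      Real.tanh (a * Real.sqrt (((n : ℝ) * π / c) ^ 2 - lam n / εp)) /
          (εp * Real.sqrt (((n : ℝ) * π / c) ^ 2 - lam n / εp))
        = Real.tanh (b * Real.sqrt (((n : ℝ) * π / c) ^ 2 + lam n / εm)) /
          (εm * Real.sqrt (((n : ℝ) * π / c) ^ 2 + lam n / εm)))
    (hlim : Tendsto lam atTop (nhds Λ)) :
    εp = εm := by
  set k : ℕ → ℝ := fun n => ((n : ℝ) * π / c) ^ 2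
  set t : ℕ → ℝ := fun n => √(k n - lam n / εp)
  set s : ℕ → ℝ := fun n => √(k n + lam n / εm)
  have hk : Tendsto k atTop atTop := (tendsto_pow_atTop two_ne_zero).comp
    ((tendsto_natCast_atTop_atTop.atTop_mul_const pi_pos).atTop_div_const hc)
  have hkp : (fun n => k n - lam n / εp) ~[atTop] k :=
    IsEquivalent.refl.sub_isLittleO ((hlim.div_const εp).isLittleO_of_tendsto_atTop hk)
  have hkm : (fun n => k n + lam n / εm) ~[atTop] k :=
    IsEquivalent.refl.add_isLittleO ((hlim.div_const εm).isLittleO_of_tendsto_atTop hk)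
  have ht : Tendsto t atTop atTop := tendsto_sqrt_atTop.comp (hkp.symm.tendsto_atTop hk)
  have hs : Tendsto s atTop atTop := tendsto_sqrt_atTop.comp (hkm.symm.tendsto_atTop hk)
  have hts : Tendsto (fun n => t n / s n) atTop (𝓝 1) :=
    (hkp.trans hkm.symm).tendsto_sqrt_div_sqrt (hkm.symm.tendsto_atTop hk)
  have hp := (tendsto_mul_tanh_mul_div_mul hεp.ne' ha).comp ht
  have hm : Tendsto (fun n => t n * (tanh (a * t n) / (εp * t n))) atTop (𝓝 εm⁻¹) := by
    have h := hts.mul ((tendsto_mul_tanh_mul_div_mul hεm.ne' hb).comp hs)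
    rw [one_mul] at h
    refine h.congr' ?_
    filter_upwards [eventually_gt_atTop n₀, hs.eventually_gt_atTop 0] with n hn hsn
    rw [Function.comp_apply, ← mul_assoc, div_mul_cancel₀ _ hsn.ne']
    exact congrArg (t n * ·) (heq n hn).symm
  exact inv_injective (tendsto_nhds_unique hp hm)

/-- If roots λₙ of the flat characteristic equation (with contrast
ε₊/ε₋) converge to a finite limit Λ, then ε₊ = ε₋: for non-critical contrast the
roots have no finite accumulation point. -/
theorem stmt_5 (εp εm a b c : ℝ) (hεp : 0 < εp) (hεm : 0 < εm)
    (ha : 0 < a) (hb : 0 < b) (hc : 0 < c) (n₀ : ℕ)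
    (lam : ℕ → ℝ) (Λ : ℝ)
    (hmem : ∀ n : ℕ, n₀ < n →
      lam n ∈ Set.Ioo (-(εm * ((n : ℝ) * π / c) ^ 2)) (εp * ((n : ℝ) * π / c) ^ 2))
    (heq : ∀ n : ℕ, n₀ < n →
      Real.tanh (a * Real.sqrt (((n : ℝ) * π / c) ^ 2 - lam n / εp)) /
          (εp * Real.sqrt (((n : ℝ) * π / c) ^ 2 - lam n / εp))
        = Real.tanh (b * Real.sqrt (((n : ℝ) * π / c) ^ 2 + lam n / εm)) /
          (εm * Real.sqrt (((n : ℝ) * π / c) ^ 2 + lam n / εm)))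
    (hlim : Tendsto lam atTop (nhds Λ)) :
    εp = εm :=
  stmt_5_general εp εm a b c hεp hεm ha hb hc n₀ lam Λ heq hlim
end

section
/- Let ε₊ > 0, ε₋ > 0, a > 0, b > 0, c > 0 and n ≥ 1 be a natural number. Then for every M > 0 there exists λ > max{M, ε₊(nπ/c)²} satisfying the oscillatory form of the flat characteristic equation: tan(a·√(λ/ε₊ − (nπ/c)²))/(ε₊·√(λ/ε₊ − (nπ/c)²)) = tanh(b·√(λ/ε₋ + (nπ/c)²))/(ε₋·√(λ/ε₋ + (nπ/c)²)). Consequently, for each fixed n the set of solutions of the characteristic equation is unbounded above. -/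
/-!
Write `λ = ε₊ (t² + (nπ/c)²)` with `t > 0`, so that `√(λ/ε₊ - (nπ/c)²) = t` and the equation
becomes `tan (a t) = k t`, where `k t = ε₊ t · tanh (b ρ) / (ε₋ ρ)`, `ρ = √(λ/ε₋ + (nπ/c)²)`, is
continuous and positive for `t > 0`. On each branch `[mπ, mπ + π/2)` the tangent increases from `0`
to `+∞`, while a continuous function is bounded on the closed branch interval; the intermediate
value theorem gives a solution on every branch, hence arbitrarily large ones.
-/

open Set

namespace Real

theorem tanh_pos {x : ℝ} (hx : 0 < x) : 0 < tanh x := by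
  rw [tanh_eq_sinh_div_cosh]
  exact div_pos (sinh_pos_iff.2 hx) (cosh_pos x)

theorem continuous_tanh : Continuous tanh := by
  simp only [funext tanh_eq_sinh_div_cosh]
  exact continuous_sinh.div continuous_cosh fun x => (cosh_pos x).ne'

theorem exists_mem_Ioo_tan_eq {k : ℝ → ℝ} (hk : ContinuousOn k (Icc 0 (π / 2))) (hk0 : 0 < k 0) :
    ∃ x ∈ Ioo 0 (π / 2), tan x = k x := by
  obtain ⟨B, hB⟩ := isCompact_Icc.exists_bound_of_continuousOn hk
  have hB0 : 0 ≤ B := (norm_nonneg _).trans (hB 0 ⟨le_rfl, by positivity⟩)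
  set x₁ := arctan (B + 1)
  have hx₁ : x₁ ∈ Ioo 0 (π / 2) := ⟨arctan_pos.2 (by linarith), arctan_lt_pi_div_two _⟩
  have hIcc : Icc 0 x₁ ⊆ Icc 0 (π / 2) := Icc_subset_Icc_right hx₁.2.le
  have hcont : ContinuousOn (fun x => tan x - k x) (Icc 0 x₁) :=
    (continuousOn_tan_Ioo.mono fun x hx => ⟨by linarith [pi_pos, hx.1], hx.2.trans_lt hx₁.2⟩).sub
      (hk.mono hIcc)
  have hkx₁ : k x₁ ≤ B := (le_abs_self _).trans (hB x₁ (hIcc ⟨hx₁.1.le, le_rfl⟩))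
  obtain ⟨x, hx, hfx⟩ := intermediate_value_Ioo hx₁.1.le hcont
    (show (0 : ℝ) ∈ Ioo (tan 0 - k 0) (tan x₁ - k x₁) by
      rw [tan_zero, tan_arctan]
      constructor <;> linarith)
  exact ⟨x, ⟨hx.1, hx.2.trans hx₁.2⟩, sub_eq_zero.1 hfx⟩

theorem exists_gt_tan_eq {k : ℝ → ℝ} (hk : ContinuousOn k (Ioi 0)) (hpos : ∀ x > 0, 0 < k x)
    (R : ℝ) : ∃ x > R, tan x = k x := by
  obtain ⟨m, hm⟩ := exists_nat_gt (max R 0 / π)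
  have hmπ : max R 0 < m * π := (div_lt_iff₀ pi_pos).1 hm
  have hmπ_pos : 0 < m * π := (le_max_right R 0).trans_lt hmπ
  obtain ⟨y, hy, hty⟩ := exists_mem_Ioo_tan_eq (k := fun y => k (y + m * π))
    (hk.comp (continuous_add_const _).continuousOn fun y hy => by
      simp only [mem_Ioi]; linarith [hy.1])
    (hpos _ (by simpa using hmπ_pos))
  refine ⟨y + m * π, by linarith [le_max_left R 0, hy.1], ?_⟩
  rwa [tan_add_nat_mul_pi]

theorem exists_gt_tan_mul_eq {a : ℝ} (ha : 0 < a) {k : ℝ → ℝ} (hk : ContinuousOn k (Ioi 0))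
    (hpos : ∀ t > 0, 0 < k t) (R : ℝ) : ∃ t > R, tan (a * t) = k t := by
  obtain ⟨x, hx, htan⟩ := exists_gt_tan_eq (k := fun x => k (x / a))
    (hk.comp (continuous_id.div_const a).continuousOn fun x hx => div_pos hx ha)
    (fun x hx => hpos _ (div_pos hx ha)) (a * R)
  refine ⟨x / a, (lt_div_iff₀' ha).2 hx, ?_⟩
  rwa [mul_div_cancel₀ x ha.ne']

end Real

open Real

theorem stmt_6_general (εp εm a b c : ℝ) (hεp : 0 < εp) (hεm : 0 < εm)
    (ha : 0 < a) (hb : 0 < b) (n : ℕ) :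
    ∀ M : ℝ, 0 < M →
      ∃ lam : ℝ, max M (εp * ((n : ℝ) * π / c) ^ 2) < lam ∧
        Real.tan (a * Real.sqrt (lam / εp - ((n : ℝ) * π / c) ^ 2)) /
            (εp * Real.sqrt (lam / εp - ((n : ℝ) * π / c) ^ 2))
          = Real.tanh (b * Real.sqrt (lam / εm + ((n : ℝ) * π / c) ^ 2)) /
            (εm * Real.sqrt (lam / εm + ((n : ℝ) * π / c) ^ 2)) := by
  intro M _
  set K := ((n : ℝ) * π / c) ^ 2
  set ρ : ℝ → ℝ := fun t => √(εp * (t ^ 2 + K) / εm + K)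
  have hρ : ∀ t > 0, 0 < ρ t := fun t ht => sqrt_pos.2 (by positivity)
  set k : ℝ → ℝ := fun t => εp * t * (tanh (b * ρ t) / (εm * ρ t))
  have hk : ContinuousOn k (Ioi 0) := by
    have hρc : Continuous ρ := by fun_prop
    refine continuousOn_of_forall_continuousAt fun t ht => ?_
    exact (continuous_const.mul continuous_id).continuousAt.mul
      ((continuous_tanh.comp (continuous_const.mul hρc)).continuousAt.div
        (continuous_const.mul hρc).continuousAt (mul_pos hεm (hρ t ht)).ne')
  have hkpos : ∀ t > 0, 0 < k t := fun t ht =>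
    mul_pos (mul_pos hεp ht) (div_pos (tanh_pos (mul_pos hb (hρ t ht))) (mul_pos hεm (hρ t ht)))
  obtain ⟨t, ht, htan⟩ := exists_gt_tan_mul_eq ha hk hkpos √(M / εp)
  have ht0 : 0 < t := (sqrt_nonneg _).trans_lt ht
  have hsqrt : √(εp * (t ^ 2 + K) / εp - K) = t := by
    rw [mul_div_cancel_left₀ _ hεp.ne', add_sub_cancel_right, sqrt_sq ht0.le]
  refine ⟨εp * (t ^ 2 + K), max_lt ?_ ?_, ?_⟩
  · have := (div_lt_iff₀ hεp).1 ((sqrt_lt' ht0).1 ht)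
    nlinarith [sq_nonneg ((n : ℝ) * π / c)]
  · nlinarith [pow_pos ht0 2]
  · rw [hsqrt, htan]
    exact mul_div_cancel_left₀ _ (mul_pos hεp ht0).ne'

/-- For each fixed transverse mode n, the flat characteristic equation in
its oscillatory form has solutions λ above any bound: the set of eigenvalues is
unbounded above. -/
theorem stmt_6 (εp εm a b c : ℝ) (hεp : 0 < εp) (hεm : 0 < εm)
    (ha : 0 < a) (hb : 0 < b) (hc : 0 < c) (n : ℕ) (hn : 1 ≤ n) :
    ∀ M : ℝ, 0 < M →
      ∃ lam : ℝ, max M (εp * ((n : ℝ) * π / c) ^ 2) < lam ∧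
        Real.tan (a * Real.sqrt (lam / εp - ((n : ℝ) * π / c) ^ 2)) /
            (εp * Real.sqrt (lam / εp - ((n : ℝ) * π / c) ^ 2))
          = Real.tanh (b * Real.sqrt (lam / εm + ((n : ℝ) * π / c) ^ 2)) /
            (εm * Real.sqrt (lam / εm + ((n : ℝ) * π / c) ^ 2)) :=
  stmt_6_general εp εm a b c hεp hεm ha hb n
end

section
/- Let ε₊ > 0, ε₋ > 0, a > 0, b > 0, c > 0, n ≥ 1 a natural number, and let λ > ε₊(nπ/c)². Set μ = √(λ/ε₊ − (nπ/c)²) and ν = √(λ/ε₋ + (nπ/c)²), and assume tan(aμ)/(ε₊μ) = tanh(bν)/(ε₋ν). Define ψ₊ : [0,a] → ℝ by ψ₊(x) = sinh(νb)·sin(μ(a−x)) and ψ₋ : [−b,0] → ℝ by ψ₋(x) = sin(μa)·sinh(ν(b+x)). Then: (1) −ε₊·(ψ₊''(x) − (nπ/c)²·ψ₊(x)) = λ·ψ₊(x) for all x ∈ (0,a); (2) ε₋·(ψ₋''(x) − (nπ/c)²·ψ₋(x)) = λ·ψ₋(x) for all x ∈ (−b,0); (3) ψ₊(a) = 0 and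 ψ₋(−b) = 0; (4) ψ₊(0) = ψ₋(0); (5) ε₊·ψ₊'(0) = −ε₋·ψ₋'(0). -/
open Real


lemma derivP (C μ a : ℝ) :
    deriv (fun x : ℝ => C * Real.sin (μ * (a - x)))
      = fun x : ℝ => C * (Real.cos (μ * (a - x)) * (-μ)) := by
  funext x
  have h1 : HasDerivAt (fun x : ℝ => μ * (a - x)) (-μ) x := by
    simpa using ((hasDerivAt_id x).const_sub a).const_mul μ
  exact ((h1.sin).const_mul C).deriv

lemma derivP2 (C μ a : ℝ) :
    deriv (fun x : ℝ => C * (Real.cos (μ * (a - x)) * (-μ)))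
      = fun x : ℝ => -(μ ^ 2) * (C * Real.sin (μ * (a - x))) := by
  funext x
  have h1 : HasDerivAt (fun x : ℝ => μ * (a - x)) (-μ) x := by
    simpa using ((hasDerivAt_id x).const_sub a).const_mul μ
  have h2 := ((h1.cos).mul_const (-μ)).const_mul C
  rw [h2.deriv]; ring

lemma derivM (C ν b : ℝ) :
    deriv (fun x : ℝ => C * Real.sinh (ν * (b + x)))
      = fun x : ℝ => C * (Real.cosh (ν * (b + x)) * ν) := by
  funext x
  have h1 : HasDerivAt (fun x : ℝ => ν * (b + x)) ν x := by
    simpa using ((hasDerivAt_id x).const_add b).const_mul ν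
  exact ((h1.sinh).const_mul C).deriv

lemma derivM2 (C ν b : ℝ) :
    deriv (fun x : ℝ => C * (Real.cosh (ν * (b + x)) * ν))
      = fun x : ℝ => ν ^ 2 * (C * Real.sinh (ν * (b + x))) := by
  funext x
  have h1 : HasDerivAt (fun x : ℝ => ν * (b + x)) ν x := by
    simpa using ((hasDerivAt_id x).const_add b).const_mul ν
  have h2 := ((h1.cosh).mul_const ν).const_mul C
  rw [h2.deriv]; ring

/-- For λ > ε₊(nπ/c)² satisfying the characteristic equation, the pair
(ψ₊, ψ₋) with ψ₊(x) = sinh(νb)·sin(μ(a−x)), ψ₋(x) = sin(μa)·sinh(ν(b+x)) solves the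
transverse eigenvalue problem: the two ODEs, Dirichlet conditions at a and −b,
continuity at 0, and the sign-flipped flux condition at 0. -/
theorem stmt_8 (εp εm a b c : ℝ) (hεp : 0 < εp) (hεm : 0 < εm)
    (ha : 0 < a) (hb : 0 < b) (hc : 0 < c) (n : ℕ) (hn : 1 ≤ n)
    (lam : ℝ) (hlam : εp * ((n : ℝ) * π / c) ^ 2 < lam)
    (μ ν : ℝ)
    (hμ : μ = Real.sqrt (lam / εp - ((n : ℝ) * π / c) ^ 2))
    (hν : ν = Real.sqrt (lam / εm + ((n : ℝ) * π / c) ^ 2))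
    (hchar : Real.tan (a * μ) / (εp * μ) = Real.tanh (b * ν) / (εm * ν))
    (ψp ψm : ℝ → ℝ)
    (hψp : ψp = fun x : ℝ => Real.sinh (ν * b) * Real.sin (μ * (a - x)))
    (hψm : ψm = fun x : ℝ => Real.sin (μ * a) * Real.sinh (ν * (b + x))) :
    (∀ x ∈ Set.Ioo (0 : ℝ) a,
        -(εp * (deriv (deriv ψp) x - ((n : ℝ) * π / c) ^ 2 * ψp x)) = lam * ψp x) ∧
    (∀ x ∈ Set.Ioo (-b) (0 : ℝ),
        εm * (deriv (deriv ψm) x - ((n : ℝ) * π / c) ^ 2 * ψm x) = lam * ψm x) ∧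
    (ψp a = 0 ∧ ψm (-b) = 0) ∧
    (ψp 0 = ψm 0) ∧
    (εp * deriv ψp 0 = -(εm * deriv ψm 0)) := by
  have hn' : (0 : ℝ) < n := by exact_mod_cast Nat.lt_of_lt_of_le Nat.zero_lt_one hn
  have hkpos : 0 < (n : ℝ) * π / c := by
    have := Real.pi_pos
    positivity
  have hlam0 : 0 < lam := lt_of_le_of_lt (by positivity) hlam
  have hμsq : μ ^ 2 = lam / εp - ((n : ℝ) * π / c) ^ 2 := by
    rw [hμ, sq_sqrt]
    have : ((n : ℝ) * π / c) ^ 2 < lam / εp := by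
      rw [lt_div_iff₀ hεp]; linarith [hlam]
    linarith
  have hμpos : 0 < μ := by
    rw [hμ]
    apply Real.sqrt_pos.mpr
    have : ((n : ℝ) * π / c) ^ 2 < lam / εp := by
      rw [lt_div_iff₀ hεp]; linarith [hlam]
    linarith
  have hνsq : ν ^ 2 = lam / εm + ((n : ℝ) * π / c) ^ 2 := by
    rw [hν, sq_sqrt]
    positivity
  have hνpos : 0 < ν := by
    rw [hν]
    apply Real.sqrt_pos.mpr
    positivity
  subst hψp hψm
  refine ⟨?_, ?_, ⟨?_, ?_⟩, ?_, ?_⟩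
  · intro x _
    rw [derivP, derivP2]
    have hl : εp * μ ^ 2 = lam - εp * ((n : ℝ) * π / c) ^ 2 := by
      rw [hμsq]; field_simp
    linear_combination (Real.sinh (ν * b) * Real.sin (μ * (a - x))) * hl
  · intro x _
    rw [derivM, derivM2]
    have hl : εm * ν ^ 2 = lam + εm * ((n : ℝ) * π / c) ^ 2 := by
      rw [hνsq]; field_simp
    linear_combination (Real.sin (μ * a) * Real.sinh (ν * (b + x))) * hl
  · simp
  · simp
  · simp [mul_comm]
  · rw [derivP, derivM]
    simp only [sub_zero, add_zero]
    -- goal: εp * (sinh (ν*b) * (cos (μ*a) * -μ)) = -(εm * (sin (μ*a) * (cosh (ν*b) * ν)))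
    have hcoshne : Real.cosh (b * ν) ≠ 0 := (Real.cosh_pos _).ne'
    have hcosne : Real.cos (a * μ) ≠ 0 := by
      intro h0
      have htan : Real.tan (a * μ) = 0 := by
        rw [Real.tan_eq_sin_div_cos, h0, div_zero]
      rw [htan, zero_div] at hchar
      have h2 := hchar.symm
      rw [div_eq_zero_iff] at h2
      rcases h2 with h2 | h2
      · rw [Real.tanh_eq_sinh_div_cosh, div_eq_zero_iff] at h2
        rcases h2 with h2 | h2
        · have := Real.sinh_eq_zero.mp h2
          nlinarith
        · exact hcoshne h2
      · have hp : (0:ℝ) < εm * ν := by positivity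
        exact absurd h2 hp.ne'
    have hmain : Real.sin (a * μ) * (εm * ν) * Real.cosh (b * ν)
        = Real.sinh (b * ν) * (εp * μ) * Real.cos (a * μ) := by
      rw [Real.tan_eq_sin_div_cos, Real.tanh_eq_sinh_div_cosh] at hchar
      field_simp at hchar
      linarith [hchar]
    have e1 : μ * a = a * μ := mul_comm _ _
    have e2 : ν * b = b * ν := mul_comm _ _
    rw [e1, e2]
    nlinarith [hmain]
end

section
/- Let ε > 0, a > 0, c > 0 and n ≥ 1 a natural number. Define ψ₊ : [0,a] → ℝ by ψ₊(x) = sinh((nπ/c)(a−x)) and ψ₋ : [−a,0] → ℝ by ψ₋(x) = sinh((nπ/c)(a+x)). Then: (1) −ε·(ψ₊''(x) − (nπ/c)²·ψ₊(x)) = 0 for all x ∈ (0,a); (2) ε·(ψ₋''(x) − (nπ/c)²·ψ₋(x)) = 0 for all x ∈ (−a,0); (3) ψ₊(a) = 0 and ψ₋(−a) = 0; (4) ψ₊(0) = ψ₋(0); (5) ε·ψ₊'(0) = −ε·ψ₋'(0). -/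
open Real

section SinhAffine

variable (α β : ℝ)

theorem deriv_sinh_affine :
    deriv (fun x => sinh (α * x + β)) = fun x => α * cosh (α * x + β) := by
  funext x
  have hlin : HasDerivAt (fun x => α * x + β) α x := (hasDerivAt_const_mul α).add_const β
  rw [hlin.sinh.deriv, mul_comm]

theorem deriv_cosh_affine :
    deriv (fun x => α * cosh (α * x + β)) = fun x => α ^ 2 * sinh (α * x + β) := by
  funext x
  have hlin : HasDerivAt (fun x => α * x + β) α x := (hasDerivAt_const_mul α).add_const β
  rw [(hlin.cosh.const_mul α).deriv]
  ring

theorem deriv_deriv_sinh_affine :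
    deriv (deriv fun x => sinh (α * x + β)) = fun x => α ^ 2 * sinh (α * x + β) := by
  rw [deriv_sinh_affine, deriv_cosh_affine]

end SinhAffine

theorem stmt_9_general (ε a c : ℝ)
    (n : ℕ)
    (ψp ψm : ℝ → ℝ)
    (hψp : ψp = fun x : ℝ => Real.sinh (((n : ℝ) * π / c) * (a - x)))
    (hψm : ψm = fun x : ℝ => Real.sinh (((n : ℝ) * π / c) * (a + x))) :
    (∀ x ∈ Set.Ioo (0 : ℝ) a,
        -(ε * (deriv (deriv ψp) x - ((n : ℝ) * π / c) ^ 2 * ψp x)) = 0) ∧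
    (∀ x ∈ Set.Ioo (-a) (0 : ℝ),
        ε * (deriv (deriv ψm) x - ((n : ℝ) * π / c) ^ 2 * ψm x) = 0) ∧
    (ψp a = 0 ∧ ψm (-a) = 0) ∧
    (ψp 0 = ψm 0) ∧
    (ε * deriv ψp 0 = -(ε * deriv ψm 0)) := by
  set k : ℝ := (n : ℝ) * π / c
  have hp : ψp = fun x => sinh (-k * x + k * a) := by
    rw [hψp]; funext x; congr 1; ring
  have hm : ψm = fun x => sinh (k * x + k * a) := by
    rw [hψm]; funext x; congr 1; ring
  subst hp hm
  refine ⟨fun x _ => ?_, fun x _ => ?_, ⟨?_, ?_⟩, ?_, ?_⟩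
  · rw [deriv_deriv_sinh_affine]; ring
  · rw [deriv_deriv_sinh_affine]; ring
  · simp
  · simp
  · simp
  · simp only [deriv_sinh_affine, mul_zero, zero_add]; ring

/-- On the symmetric rectangle with critical contrast ε₊ = ε₋ = ε, the
pair ψ₊(x) = sinh((nπ/c)(a−x)), ψ₋(x) = sinh((nπ/c)(a+x)) is a transverse profile of
an eigenfunction of the indefinite Laplacian with eigenvalue λ = 0: it satisfies the
two ODEs, Dirichlet conditions at ±a, continuity at 0 and the sign-flipped flux
condition at 0. -/
theorem stmt_9 (ε a c : ℝ) (hε : 0 < ε) (ha : 0 < a) (hc : 0 < c)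
    (n : ℕ) (hn : 1 ≤ n)
    (ψp ψm : ℝ → ℝ)
    (hψp : ψp = fun x : ℝ => Real.sinh (((n : ℝ) * π / c) * (a - x)))
    (hψm : ψm = fun x : ℝ => Real.sinh (((n : ℝ) * π / c) * (a + x))) :
    (∀ x ∈ Set.Ioo (0 : ℝ) a,
        -(ε * (deriv (deriv ψp) x - ((n : ℝ) * π / c) ^ 2 * ψp x)) = 0) ∧
    (∀ x ∈ Set.Ioo (-a) (0 : ℝ),
        ε * (deriv (deriv ψm) x - ((n : ℝ) * π / c) ^ 2 * ψm x) = 0) ∧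
    (ψp a = 0 ∧ ψm (-a) = 0) ∧
    (ψp 0 = ψm 0) ∧
    (ε * deriv ψp 0 = -(ε * deriv ψm 0)) :=
  stmt_9_general ε a c n ψp ψm hψp hψm
end

section
/- Let c > 0 and n ≥ 1 a natural number, and define f : (−π/2, π/2) → ℝ by f(x) = exp(−(nπ/c)·artanh(sin x)). Then f is twice differentiable on (−π/2, π/2) and satisfies, for every x ∈ (−π/2, π/2): −f''(x) + tan(x)·f'(x) + ((nπ/c)²/cos²x)·f(x) = 0. -/
/-!
Since artanh' (y) = 1 / (1 - y²), the chain rule gives (artanh ∘ sin)' = cos / cos² = 1 / cos on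
(-π/2, π/2). Hence g = exp (-a · artanh ∘ sin) satisfies the first-order equation g' = -(a / cos) g,
and differentiating once more, g'' = (a² - a sin) / cos² · g, which makes
-g'' + tan · g' + a² / cos² · g vanish identically.
-/

open Real Set Topology

/-- The real inverse hyperbolic tangent, artanh(y) = ½·log((1+y)/(1−y)). -/
noncomputable def artanh (y : ℝ) : ℝ := (1 / 2) * Real.log ((1 + y) / (1 - y))

lemma hasDerivAt_artanh {y : ℝ} (h₁ : -1 < y) (h₂ : y < 1) :
    HasDerivAt _root_.artanh (1 / (1 - y ^ 2)) y := by
  have hsub : (1 : ℝ) - y ≠ 0 := by linarith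
  have hadd : (1 : ℝ) + y ≠ 0 := by linarith
  have hsq : (1 : ℝ) - y ^ 2 ≠ 0 := by nlinarith
  have hquot : HasDerivAt (fun t => (1 + t) / (1 - t))
      ((1 * (1 - y) - (1 + y) * (-1)) / (1 - y) ^ 2) y :=
    ((hasDerivAt_id y).const_add 1).div ((hasDerivAt_id y).const_sub 1) hsub
  refine ((hquot.log (div_ne_zero hadd hsub)).const_mul (1 / 2 : ℝ)).congr_deriv ?_
  field_simp
  ring

lemma hasDerivAt_artanh_sin {x : ℝ} (hx : 0 < cos x) :
    HasDerivAt (fun t => _root_.artanh (sin t)) (cos x)⁻¹ x := by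
  have h₁ : -1 < sin x := by nlinarith [sin_sq_add_cos_sq x]
  have h₂ : sin x < 1 := by nlinarith [sin_sq_add_cos_sq x]
  refine ((hasDerivAt_artanh h₁ h₂).comp x (hasDerivAt_sin x)).congr_deriv ?_
  rw [← cos_sq']
  field_simp

lemma hasDerivAt_exp_artanh_sin (a : ℝ) {x : ℝ} (hx : 0 < cos x) :
    HasDerivAt (fun t => exp (-a * _root_.artanh (sin t)))
      (-(a / cos x) * exp (-a * _root_.artanh (sin x))) x :=
  ((hasDerivAt_artanh_sin hx).const_mul (-a)).exp.congr_deriv (by ring)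

lemma deriv_exp_artanh_sin_eqOn (a : ℝ) :
    EqOn (deriv fun t => exp (-a * _root_.artanh (sin t)))
      (fun t => -(a / cos t) * exp (-a * _root_.artanh (sin t))) (Ioo (-(π / 2)) (π / 2)) :=
  fun _ hx => (hasDerivAt_exp_artanh_sin a (cos_pos_of_mem_Ioo hx)).deriv

lemma hasDerivAt_deriv_exp_artanh_sin (a : ℝ) {x : ℝ} (hx : x ∈ Ioo (-(π / 2)) (π / 2)) :
    HasDerivAt (deriv fun t => exp (-a * _root_.artanh (sin t)))
      ((a ^ 2 - a * sin x) / cos x ^ 2 * exp (-a * _root_.artanh (sin x))) x := by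
  have hcos : 0 < cos x := cos_pos_of_mem_Ioo hx
  have hcoef : HasDerivAt (fun t => -(a / cos t)) (-(a * sin x / cos x ^ 2)) x := by
    refine (((hasDerivAt_cos x).inv hcos.ne').const_mul a).neg.congr_deriv ?_
    ring
  have hprod := hcoef.mul (hasDerivAt_exp_artanh_sin a hcos)
  have hnhds : (deriv fun t => exp (-a * _root_.artanh (sin t))) =ᶠ[𝓝 x]
      fun t => -(a / cos t) * exp (-a * _root_.artanh (sin t)) :=
    Filter.eventuallyEq_of_mem (isOpen_Ioo.mem_nhds hx) (deriv_exp_artanh_sin_eqOn a)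
  refine (hprod.congr_of_eventuallyEq hnhds).congr_deriv ?_
  field_simp
  ring

theorem stmt_13_general (c : ℝ) (n : ℕ)
    (f : ℝ → ℝ)
    (hf : f = fun x : ℝ => Real.exp (-((n : ℝ) * π / c) * _root_.artanh (Real.sin x))) :
    (∀ x ∈ Set.Ioo (-(π / 2)) (π / 2), DifferentiableAt ℝ f x) ∧
    (∀ x ∈ Set.Ioo (-(π / 2)) (π / 2), DifferentiableAt ℝ (deriv f) x) ∧
    (∀ x ∈ Set.Ioo (-(π / 2)) (π / 2),
      -(deriv (deriv f) x) + Real.tan x * deriv f x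
          + (((n : ℝ) * π / c) ^ 2 / (Real.cos x) ^ 2) * f x = 0) := by
  subst hf
  set a : ℝ := (n : ℝ) * π / c
  refine ⟨fun x hx => (hasDerivAt_exp_artanh_sin a (cos_pos_of_mem_Ioo hx)).differentiableAt,
    fun x hx => (hasDerivAt_deriv_exp_artanh_sin a hx).differentiableAt, fun x hx => ?_⟩
  have hcos : cos x ≠ 0 := (cos_pos_of_mem_Ioo hx).ne'
  rw [(hasDerivAt_deriv_exp_artanh_sin a hx).deriv, deriv_exp_artanh_sin_eqOn a hx,
    tan_eq_sin_div_cos]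
  field_simp
  ring

/-- f(x) = exp(−(nπ/c)·artanh(sin x)) is twice differentiable on
(−π/2, π/2) and solves the transverse ODE −f'' + tan(x)f' + ((nπ/c)²/cos²x)f = 0
of the K = +1 curved operator. -/
theorem stmt_13 (c : ℝ) (hc : 0 < c) (n : ℕ) (hn : 1 ≤ n)
    (f : ℝ → ℝ)
    (hf : f = fun x : ℝ => Real.exp (-((n : ℝ) * π / c) * _root_.artanh (Real.sin x))) :
    (∀ x ∈ Set.Ioo (-(π / 2)) (π / 2), DifferentiableAt ℝ f x) ∧
    (∀ x ∈ Set.Ioo (-(π / 2)) (π / 2), DifferentiableAt ℝ (deriv f) x) ∧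
    (∀ x ∈ Set.Ioo (-(π / 2)) (π / 2),
      -(deriv (deriv f) x) + Real.tan x * deriv f x
          + (((n : ℝ) * π / c) ^ 2 / (Real.cos x) ^ 2) * f x = 0) :=
  stmt_13_general c n f hf
end

section
/- Let c > 0 and n ≥ 1 a natural number, and define f : ℝ → ℝ by f(x) = exp(−(nπ/c)·arctan(sinh x)). Then f is twice differentiable and satisfies, for every x ∈ ℝ: −f''(x) − tanh(x)·f'(x) + ((nπ/c)²/cosh²x)·f(x) = 0. -/
open Real

/-! `arctan ∘ sinh` is the Gudermannian function, whose derivative is `1 / cosh`; hence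
`g = exp (a · arctan ∘ sinh)` satisfies the first-order equation `g' = a g / cosh`. Differentiating
once more, `g'' = -a sinh g / cosh² + a² g / cosh²`, and the `sinh` term is cancelled exactly
by `tanh · g'`. -/

theorem hasDerivAt_arctan_sinh (x : ℝ) :
    HasDerivAt (fun x => arctan (sinh x)) (cosh x)⁻¹ x := by
  refine ((hasDerivAt_arctan (sinh x)).comp x (hasDerivAt_sinh x)).congr_deriv ?_
  have hsq : 1 + sinh x ^ 2 = cosh x ^ 2 := by linarith [cosh_sq_sub_sinh_sq x]
  have hcosh : cosh x ≠ 0 := (cosh_pos x).ne'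
  rw [hsq]
  field_simp

theorem hasDerivAt_cosh_inv (x : ℝ) :
    HasDerivAt (fun x => (cosh x)⁻¹) (-sinh x / cosh x ^ 2) x :=
  (hasDerivAt_cosh x).inv (cosh_pos x).ne'

theorem hasDerivAt_exp_mul_arctan_sinh (a x : ℝ) :
    HasDerivAt (fun x => exp (a * arctan (sinh x)))
      (a * (cosh x)⁻¹ * exp (a * arctan (sinh x))) x := by
  convert ((hasDerivAt_arctan_sinh x).const_mul a).exp using 1
  ring

theorem stmt_14_general (c : ℝ) (n : ℕ)
    (f : ℝ → ℝ)
    (hf : f = fun x : ℝ => Real.exp (-((n : ℝ) * π / c) * Real.arctan (Real.sinh x))) :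
    Differentiable ℝ f ∧ Differentiable ℝ (deriv f) ∧
    (∀ x : ℝ,
      -(deriv (deriv f) x) - Real.tanh x * deriv f x
          + (((n : ℝ) * π / c) ^ 2 / (Real.cosh x) ^ 2) * f x = 0) := by
  set a : ℝ := -((n : ℝ) * π / c)
  have hf' : ∀ x, HasDerivAt f (a * (cosh x)⁻¹ * f x) x := fun x => by
    subst hf; exact hasDerivAt_exp_mul_arctan_sinh a x
  have hderiv : deriv f = fun x => a * (cosh x)⁻¹ * f x := funext fun x => (hf' x).deriv
  have hf'' : ∀ x, HasDerivAt (deriv f)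
      (a * (-sinh x / cosh x ^ 2) * f x + a * (cosh x)⁻¹ * (a * (cosh x)⁻¹ * f x)) x :=
    fun x => hderiv ▸ ((hasDerivAt_cosh_inv x).const_mul a).mul (hf' x)
  refine ⟨fun x => (hf' x).differentiableAt, fun x => (hf'' x).differentiableAt, fun x => ?_⟩
  have hcosh : cosh x ≠ 0 := (cosh_pos x).ne'
  have ha : a ^ 2 = ((n : ℝ) * π / c) ^ 2 := neg_sq _
  rw [(hf'' x).deriv, hderiv, tanh_eq_sinh_div_cosh, ← ha]
  field_simp
  ring

/-- f(x) = exp(−(nπ/c)·arctan(sinh x)) is twice differentiable and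
solves the transverse ODE −f'' − tanh(x)f' + ((nπ/c)²/cosh²x)f = 0 of the K = −1
curved operator. -/
theorem stmt_14 (c : ℝ) (hc : 0 < c) (n : ℕ) (hn : 1 ≤ n)
    (f : ℝ → ℝ)
    (hf : f = fun x : ℝ => Real.exp (-((n : ℝ) * π / c) * Real.arctan (Real.sinh x))) :
    Differentiable ℝ f ∧ Differentiable ℝ (deriv f) ∧
    (∀ x : ℝ,
      -(deriv (deriv f) x) - Real.tanh x * deriv f x
          + (((n : ℝ) * π / c) ^ 2 / (Real.cosh x) ^ 2) * f x = 0) :=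
  stmt_14_general c n f hf
end

section
/- For every x ∈ (0, π/2): 1 − x ≤ ((1 + sin x)/(1 − sin x))^{−1/2} ≤ 1 − (2/π)·x. -/
open Real

/-!
Writing `y = π / 4 - x / 2`, the half-angle formulas turn `(1 + sin x) / (1 - sin x)` into
`cot² y`, so the quantity is `tan y` with `0 < y < π / 4`. Since `tan' = 1 / cos²` increases on
`[0, π / 2)`, `tan` is convex there; the lower bound is its tangent line at `π / 4` and the upper
bound its chord over `[0, π / 4]`.
-/

theorem Real.convexOn_tan_Ico : ConvexOn ℝ (Set.Ico 0 (π / 2)) tan := by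
  have hcos : ∀ x ∈ Set.Ico 0 (π / 2), 0 < cos x := fun x hx =>
    cos_pos_of_mem_Ioo ⟨by linarith [pi_pos, hx.1], hx.2⟩
  refine MonotoneOn.convexOn_of_deriv (convex_Ico _ _)
    (continuousOn_tan.mono fun x hx => (hcos x hx).ne')
    (fun x hx => (differentiableAt_tan.2 (hcos x (interior_subset hx)).ne').differentiableWithinAt)
    ?_
  rw [interior_Ico]
  intro x hx y hy hxy
  simp only [deriv_tan]
  have hcy := hcos y (Set.Ioo_subset_Ico_self hy)
  have hcos_le : cos y ≤ cos x :=
    antitoneOn_cos ⟨hx.1.le, by linarith [hx.2, pi_pos]⟩ ⟨hy.1.le, by linarith [hy.2, pi_pos]⟩ hxy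
  gcongr

theorem Real.tan_le_four_div_pi_mul {y : ℝ} (h0 : 0 ≤ y) (h1 : y ≤ π / 4) :
    tan y ≤ 4 / π * y := by
  rcases h0.eq_or_lt with rfl | h0
  · simp
  rcases h1.eq_or_lt with rfl | h1
  · simp [tan_pi_div_four, pi_pos.ne']
  have hchord := convexOn_tan_Ico.secant_mono_aux1 (x := 0) (z := π / 4)
    ⟨le_rfl, by positivity⟩ ⟨by positivity, by linarith [pi_pos]⟩ h0 h1
  rw [tan_zero, tan_pi_div_four] at hchord
  rw [div_mul_eq_mul_div, le_div_iff₀ pi_pos]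
  linarith

theorem Real.two_mul_sub_pi_div_four_add_one_le_tan {y : ℝ} (h0 : 0 ≤ y) (h1 : y < π / 2) :
    2 * (y - π / 4) + 1 ≤ tan y := by
  have hπ4 : π / 4 ∈ Set.Ico 0 (π / 2) := ⟨by positivity, by linarith [pi_pos]⟩
  have hderiv : HasDerivAt tan 2 (π / 4) := by
    convert hasDerivAt_tan (cos_pos_of_mem_Ioo ⟨by linarith [pi_pos], hπ4.2⟩).ne' using 1
    rw [cos_pi_div_four, div_pow, sq_sqrt zero_le_two]; norm_num
  rcases lt_trichotomy y (π / 4) with hy | rfl | hy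
  · have hslope := convexOn_tan_Ico.slope_le_of_hasDerivAt ⟨h0, h1⟩ hπ4 hy hderiv
    rw [slope_def_field, tan_pi_div_four, div_le_iff₀ (by linarith)] at hslope
    linarith
  · simp [tan_pi_div_four]
  · have hslope := convexOn_tan_Ico.le_slope_of_hasDerivAt hπ4 ⟨h0, h1⟩ hy hderiv
    rw [slope_def_field, tan_pi_div_four, le_div_iff₀ (by linarith)] at hslope
    linarith

theorem Real.one_add_sin_div_one_sub_sin_rpow_neg_half {x : ℝ}
    (h0 : -(π / 2) < x) (h1 : x < π / 2) :
    ((1 + sin x) / (1 - sin x)) ^ (-(1 : ℝ) / 2) = tan (π / 4 - x / 2) := by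
  set y := π / 4 - x / 2
  have hx : x = π / 2 - 2 * y := by ring
  have hsy : 0 < sin y := sin_pos_of_pos_of_lt_pi (by linarith) (by linarith)
  have hcy : 0 < cos y := cos_pos_of_mem_Ioo ⟨by linarith, by linarith⟩
  have hratio : (1 + sin x) / (1 - sin x) = (cos y / sin y) ^ 2 := by
    have hpyth := sin_sq_add_cos_sq y
    rw [hx, sin_pi_div_two_sub, cos_two_mul, div_pow, div_eq_div_iff (by nlinarith) (by positivity)]
    linear_combination 2 * cos y ^ 2 * hpyth
  rw [hratio, ← rpow_natCast, ← rpow_mul (by positivity), tan_eq_sin_div_cos]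
  norm_num [rpow_neg_one, inv_div]

/-- For every x ∈ (0, π/2),
1 − x ≤ ((1 + sin x)/(1 − sin x))^{−1/2} ≤ 1 − (2/π)·x. -/
theorem stmt_16 :
    ∀ x ∈ Set.Ioo (0 : ℝ) (π / 2),
      1 - x ≤ ((1 + Real.sin x) / (1 - Real.sin x)) ^ (-(1 : ℝ) / 2) ∧
      ((1 + Real.sin x) / (1 - Real.sin x)) ^ (-(1 : ℝ) / 2) ≤ 1 - (2 / π) * x := by
  rintro x ⟨hx0, hx1⟩
  rw [one_add_sin_div_one_sub_sin_rpow_neg_half (by linarith) hx1]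
  constructor
  · have htangent :=
      two_mul_sub_pi_div_four_add_one_le_tan (y := π / 4 - x / 2) (by linarith) (by linarith)
    linarith
  · calc tan (π / 4 - x / 2) ≤ 4 / π * (π / 4 - x / 2) :=
          tan_le_four_div_pi_mul (by linarith) (by linarith)
      _ = 1 - 2 / π * x := by field_simp; ring
end

section
/- Let c > 0 and 0 < a₁ < a₂ < a, and let χ : ℝ → ℝ be infinitely differentiable with χ(x) = 1 for x ∈ [0, a₁] and χ(x) = 0 for x ∈ [a₂, a]. For each natural number n ≥ 1 define ψₙ : [0,a] → ℝ by ψₙ(x) = exp(−(nπ/c)·x)·χ(x). Then the quotient (∫₀ᵃ (−ψₙ''(x) + (nπ/c)²·ψₙ(x))² dx) / (∫₀ᵃ ψₙ(x)² dx) tends to 0 as n → ∞. -/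
open Real Filter

private lemma exp_linear_hasDerivAt (b x : ℝ) :
    HasDerivAt (fun x => Real.exp (-b * x)) (-b * Real.exp (-b * x)) x := by
  have h : HasDerivAt (fun x : ℝ => -b * x) (-b) x := by
    simpa using (hasDerivAt_id x).const_mul (-b)
  simpa [mul_comm] using h.exp

private lemma deriv_psi (b : ℝ) {χ : ℝ → ℝ} (hχ : ContDiff ℝ (⊤ : ℕ∞) χ) :
    deriv (fun x => Real.exp (-b * x) * χ x)
      = fun x => Real.exp (-b * x) * (-b * χ x + deriv χ x) := by
  funext x
  have hχd : HasDerivAt χ (deriv χ x) x := (hχ.differentiable (by simp) x).hasDerivAt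
  have h : HasDerivAt (fun x => Real.exp (-b * x) * χ x) _ x := (exp_linear_hasDerivAt b x).mul hχd
  rw [h.deriv]; ring

private lemma deriv2_psi (b : ℝ) {χ : ℝ → ℝ} (hχ : ContDiff ℝ (⊤ : ℕ∞) χ) (x : ℝ) :
    deriv (deriv (fun x => Real.exp (-b * x) * χ x)) x
      = Real.exp (-b * x) * (b ^ 2 * χ x - 2 * b * deriv χ x + deriv (deriv χ) x) := by
  rw [deriv_psi b hχ]
  have hχ' : ContDiff ℝ (⊤ : ℕ∞) (deriv χ) := (contDiff_infty_iff_deriv.mp hχ).2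
  have h1 : HasDerivAt χ (deriv χ x) x := (hχ.differentiable (by simp) x).hasDerivAt
  have h2 : HasDerivAt (deriv χ) (deriv (deriv χ) x) x :=
    (hχ'.differentiable (by simp) x).hasDerivAt
  have hin : HasDerivAt (fun x => -b * χ x + deriv χ x)
      (-b * deriv χ x + deriv (deriv χ) x) x := (h1.const_mul (-b)).add h2
  have h : HasDerivAt (fun x => Real.exp (-b * x) * (-b * χ x + deriv χ x)) _ x :=
    (exp_linear_hasDerivAt b x).mul hin
  rw [h.deriv]; ring

private lemma dchi_zero {χ : ℝ → ℝ} {a₁ : ℝ} (h1 : ∀ x ∈ Set.Icc (0 : ℝ) a₁, χ x = 1)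
    {x : ℝ} (hx : x ∈ Set.Ioo (0 : ℝ) a₁) : deriv χ x = 0 := by
  have hev : χ =ᶠ[nhds x] fun _ => (1 : ℝ) :=
    Filter.eventuallyEq_of_mem (isOpen_Ioo.mem_nhds hx)
      (fun y hy => h1 y ⟨hy.1.le, hy.2.le⟩)
  rw [hev.deriv_eq]
  exact deriv_const x 1

private lemma ddchi_zero {χ : ℝ → ℝ} {a₁ : ℝ} (h1 : ∀ x ∈ Set.Icc (0 : ℝ) a₁, χ x = 1)
    {x : ℝ} (hx : x ∈ Set.Ioo (0 : ℝ) a₁) : deriv (deriv χ) x = 0 := by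
  have hev : deriv χ =ᶠ[nhds x] fun _ => (0 : ℝ) :=
    Filter.eventuallyEq_of_mem (isOpen_Ioo.mem_nhds hx)
      (fun y hy => dchi_zero h1 hy)
  rw [hev.deriv_eq]
  exact deriv_const x 0

private lemma integral_exp_neg_mul (b x₀ : ℝ) (hb : 0 < b) :
    ∫ x in (0 : ℝ)..x₀, Real.exp (-b * x) = (1 - Real.exp (-b * x₀)) / b := by
  have h : ∀ x ∈ Set.uIcc (0 : ℝ) x₀,
      HasDerivAt (fun x => -(1 / b) * Real.exp (-b * x)) (Real.exp (-b * x)) x := by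
    intro x _
    have := (exp_linear_hasDerivAt b x).const_mul (-(1 / b))
    convert this using 1
    · rfl
    · rfl
    · rw [← mul_assoc, neg_mul_neg, one_div_mul_cancel hb.ne', one_mul]
  have hint : IntervalIntegrable (fun x => Real.exp (-b * x)) MeasureTheory.volume 0 x₀ :=
    (Real.continuous_exp.comp (by continuity)).intervalIntegrable _ _
  rw [intervalIntegral.integral_eq_sub_of_hasDerivAt h hint]
  field_simp
  simp only [mul_zero, neg_zero, Real.exp_zero]; ring

private lemma tendsto_pow_mul_exp_neg_mul (k : ℕ) {b : ℝ} (hb : 0 < b) :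
    Tendsto (fun t : ℝ => t ^ k * Real.exp (-b * t)) atTop (nhds 0) := by
  have hmul : Tendsto (fun t : ℝ => b * t) atTop atTop :=
    Tendsto.const_mul_atTop hb tendsto_id
  have h := (tendsto_pow_mul_exp_neg_atTop_nhds_zero k).comp hmul
  have h2 := h.const_mul (1 / b ^ k)
  rw [mul_zero] at h2
  refine h2.congr fun t => ?_
  have hbk : b ^ k ≠ 0 := (pow_pos hb k).ne'
  simp only [Function.comp_apply, mul_pow, neg_mul]
  field_simp

/-- With a smooth cut-off χ equal to 1 on [0,a₁] and 0 on [a₂,a], the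
functions ψₙ(x) = exp(−(nπ/c)x)·χ(x) form a singular sequence for 0: the quotient of
the squared L²-norm of the residual (−ψₙ'' + (nπ/c)²ψₙ) by the squared L²-norm of ψₙ
tends to 0 as n → ∞. -/
theorem stmt_18 (c a a₁ a₂ : ℝ) (hc : 0 < c) (ha₁ : 0 < a₁) (h₁₂ : a₁ < a₂) (h₂a : a₂ < a)
    (χ : ℝ → ℝ) (hχ : ContDiff ℝ (⊤ : ℕ∞) χ)
    (hχ1 : ∀ x ∈ Set.Icc (0 : ℝ) a₁, χ x = 1)
    (hχ0 : ∀ x ∈ Set.Icc a₂ a, χ x = 0)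
    (ψ : ℕ → ℝ → ℝ)
    (hψ : ψ = fun (n : ℕ) (x : ℝ) => Real.exp (-((n : ℝ) * π / c) * x) * χ x) :
    Tendsto
      (fun n : ℕ =>
        (∫ x in (0 : ℝ)..a,
            (-(deriv (deriv (ψ n)) x) + ((n : ℝ) * π / c) ^ 2 * ψ n x) ^ 2) /
          (∫ x in (0 : ℝ)..a, (ψ n x) ^ 2))
      atTop (nhds 0) := by
  have ha : (0 : ℝ) < a := lt_trans (lt_trans ha₁ h₁₂) h₂a
  set μ : ℕ → ℝ := fun n => (n : ℝ) * π / c with hμ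
  have hμpos : ∀ n : ℕ, 1 ≤ n → π / c ≤ μ n := by
    intro n hn
    have : (1 : ℝ) ≤ (n : ℝ) := by exact_mod_cast hn
    calc π / c = 1 * π / c := by ring
    _ ≤ (n : ℝ) * π / c := by
        gcongr
  have hπc : (0 : ℝ) < π / c := div_pos pi_pos hc
  have hμnonneg : ∀ n : ℕ, 0 ≤ μ n := by
    intro n
    exact div_nonneg (mul_nonneg (Nat.cast_nonneg n) pi_pos.le) hc.le
  -- continuity of deriv χ and deriv (deriv χ)
  have hchiI : ContDiff ℝ (⊤ : ℕ∞) χ := hχ.of_le (by simp)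
  have hχ' : ContDiff ℝ (⊤ : ℕ∞) (deriv χ) := (contDiff_infty_iff_deriv.mp hchiI).2
  have hχ'' : ContDiff ℝ (⊤ : ℕ∞) (deriv (deriv χ)) := (contDiff_infty_iff_deriv.mp hχ').2
  -- the residual
  have hres : ∀ (n : ℕ) (x : ℝ),
      -(deriv (deriv (ψ n)) x) + μ n ^ 2 * ψ n x
        = Real.exp (-μ n * x) * (2 * μ n * deriv χ x - deriv (deriv χ) x) := by
    intro n x
    simp only [hψ]
    rw [deriv2_psi (μ n) hchiI x]
    ring
  -- bounds for deriv χ and deriv (deriv χ) on [0, a]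
  obtain ⟨K₁, hK₁⟩ := (isCompact_Icc (a := (0:ℝ)) (b := a)).exists_bound_of_continuousOn
    (hχ'.continuous.continuousOn)
  obtain ⟨K₂, hK₂⟩ := (isCompact_Icc (a := (0:ℝ)) (b := a)).exists_bound_of_continuousOn
    (hχ''.continuous.continuousOn)
  have hK₁0 : 0 ≤ K₁ := le_trans (norm_nonneg _) (hK₁ 0 ⟨le_refl _, ha.le⟩)
  have hK₂0 : 0 ≤ K₂ := le_trans (norm_nonneg _) (hK₂ 0 ⟨le_refl _, ha.le⟩)
  -- numerator bound
  have hnum : ∀ n : ℕ,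
      (∫ x in (0 : ℝ)..a,
          (-(deriv (deriv (ψ n)) x) + μ n ^ 2 * ψ n x) ^ 2)
        ≤ Real.exp (-(2 * a₁) * μ n) * (2 * μ n * K₁ + K₂) ^ 2 * a := by
    intro n
    set C : ℝ := Real.exp (-(2 * a₁) * μ n) * (2 * μ n * K₁ + K₂) ^ 2 with hC
    have hbound : ∀ x ∈ Set.uIoc (0 : ℝ) a,
        ‖(-(deriv (deriv (ψ n)) x) + μ n ^ 2 * ψ n x) ^ 2‖ ≤ C := by
      intro x hx
      rw [Set.uIoc_of_le ha.le] at hx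
      rw [hres n x]
      rw [Real.norm_eq_abs, abs_of_nonneg (sq_nonneg _)]
      rcases lt_or_ge x a₁ with hxa | hxa
      · have hz : deriv χ x = 0 := dchi_zero hχ1 ⟨hx.1, hxa⟩
        have hz' : deriv (deriv χ) x = 0 := ddchi_zero hχ1 ⟨hx.1, hxa⟩
        rw [hz, hz']
        simp only [mul_zero, sub_zero, zero_pow, ne_eq, OfNat.ofNat_ne_zero,
          not_false_eq_true, mul_zero]
        positivity
      · have hxIcc : x ∈ Set.Icc (0 : ℝ) a := ⟨le_trans ha₁.le hxa, hx.2⟩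
        have hexp : Real.exp (-μ n * x) ^ 2 ≤ Real.exp (-(2 * a₁) * μ n) := by
          rw [← Real.exp_nat_mul]
          apply Real.exp_le_exp.mpr
          have := mul_le_mul_of_nonneg_left hxa (hμnonneg n)
          push_cast
          linarith
        have habs : |2 * μ n * deriv χ x - deriv (deriv χ) x| ≤ 2 * μ n * K₁ + K₂ := by
          have h1 : |deriv χ x| ≤ K₁ := by
            simpa [Real.norm_eq_abs] using hK₁ x hxIcc
          have h2 : |deriv (deriv χ) x| ≤ K₂ := by
            simpa [Real.norm_eq_abs] using hK₂ x hxIcc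
          calc |2 * μ n * deriv χ x - deriv (deriv χ) x|
              ≤ |2 * μ n * deriv χ x| + |deriv (deriv χ) x| := abs_sub _ _
          _ = 2 * μ n * |deriv χ x| + |deriv (deriv χ) x| := by
              rw [abs_mul, abs_of_nonneg (by positivity : (0:ℝ) ≤ 2 * μ n)]
          _ ≤ 2 * μ n * K₁ + K₂ := by
              have := hμnonneg n
              nlinarith
        have hsq : (2 * μ n * deriv χ x - deriv (deriv χ) x) ^ 2
            ≤ (2 * μ n * K₁ + K₂) ^ 2 := by
          rw [← sq_abs]
          exact pow_le_pow_left₀ (abs_nonneg _) habs 2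
        calc (Real.exp (-μ n * x) * (2 * μ n * deriv χ x - deriv (deriv χ) x)) ^ 2
            = Real.exp (-μ n * x) ^ 2 * (2 * μ n * deriv χ x - deriv (deriv χ) x) ^ 2 := by
              ring
        _ ≤ Real.exp (-(2 * a₁) * μ n) * (2 * μ n * K₁ + K₂) ^ 2 :=
              mul_le_mul hexp hsq (sq_nonneg _) (Real.exp_pos _).le
    have := intervalIntegral.norm_integral_le_of_norm_le_const hbound
    rw [Real.norm_eq_abs] at this
    calc (∫ x in (0 : ℝ)..a, (-(deriv (deriv (ψ n)) x) + μ n ^ 2 * ψ n x) ^ 2)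
        ≤ |∫ x in (0 : ℝ)..a, (-(deriv (deriv (ψ n)) x) + μ n ^ 2 * ψ n x) ^ 2| :=
          le_abs_self _
    _ ≤ C * |a - 0| := this
    _ = C * a := by rw [sub_zero, abs_of_pos ha]
  -- continuity of ψₙ²
  have hχc : Continuous χ := hχ.continuous
  have hψcont : ∀ n : ℕ, Continuous (fun x : ℝ => ψ n x ^ 2) := by
    intro n
    rw [hψ]
    exact ((Real.continuous_exp.comp (continuous_const.mul continuous_id)).mul hχc).pow 2
  -- denominator lower bound
  have hδ : (0 : ℝ) < 1 - Real.exp (-(2 * (π / c)) * a₁) := by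
    have h1 : Real.exp (-(2 * (π / c)) * a₁) < 1 := by
      rw [Real.exp_lt_one_iff]
      nlinarith
    linarith
  set δ : ℝ := 1 - Real.exp (-(2 * (π / c)) * a₁) with hδdef
  have hden : ∀ n : ℕ, 1 ≤ n → δ / (2 * μ n) ≤ ∫ x in (0 : ℝ)..a, ψ n x ^ 2 := by
    intro n hn
    have hμn : 0 < μ n := lt_of_lt_of_le hπc (hμpos n hn)
    have hi1 : IntervalIntegrable (fun x => ψ n x ^ 2) MeasureTheory.volume 0 a₁ :=
      (hψcont n).intervalIntegrable _ _
    have hi2 : IntervalIntegrable (fun x => ψ n x ^ 2) MeasureTheory.volume a₁ a :=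
      (hψcont n).intervalIntegrable _ _
    have hsplit : (∫ x in (0 : ℝ)..a₁, ψ n x ^ 2) + ∫ x in a₁..a, ψ n x ^ 2
        = ∫ x in (0 : ℝ)..a, ψ n x ^ 2 :=
      intervalIntegral.integral_add_adjacent_intervals hi1 hi2
    have h2 : 0 ≤ ∫ x in a₁..a, ψ n x ^ 2 :=
      intervalIntegral.integral_nonneg (by linarith) (fun x _ => sq_nonneg _)
    have h1 : (∫ x in (0 : ℝ)..a₁, ψ n x ^ 2)
        = ∫ x in (0 : ℝ)..a₁, Real.exp (-(2 * μ n) * x) := by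
      apply intervalIntegral.integral_congr
      intro x hx
      rw [Set.uIcc_of_le ha₁.le] at hx
      simp only [hψ]
      rw [hχ1 x hx, mul_one, sq, ← Real.exp_add]
      congr 1
      ring
    have h1v : (∫ x in (0 : ℝ)..a₁, Real.exp (-(2 * μ n) * x))
        = (1 - Real.exp (-(2 * μ n) * a₁)) / (2 * μ n) :=
      integral_exp_neg_mul _ _ (by linarith)
    have hexpmono : Real.exp (-(2 * μ n) * a₁) ≤ Real.exp (-(2 * (π / c)) * a₁) := by
      apply Real.exp_le_exp.mpr
      have := hμpos n hn
      nlinarith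
    have hmono : δ / (2 * μ n) ≤ (1 - Real.exp (-(2 * μ n) * a₁)) / (2 * μ n) := by
      gcongr
      rw [hδdef]
      exact sub_le_sub_left hexpmono 1
    linarith [hmono, hsplit, h2, h1, h1v]
  -- the dominating function g
  set g : ℝ → ℝ := fun t => (2 * a / δ) *
      (4 * K₁ ^ 2 * (t ^ 3 * Real.exp (-(2 * a₁) * t))
        + 4 * K₁ * K₂ * (t ^ 2 * Real.exp (-(2 * a₁) * t))
        + K₂ ^ 2 * (t ^ 1 * Real.exp (-(2 * a₁) * t))) with hg
  have hgt : Tendsto g atTop (nhds 0) := by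
    have h3 := tendsto_pow_mul_exp_neg_mul 3 (b := 2 * a₁) (by linarith)
    have h2 := tendsto_pow_mul_exp_neg_mul 2 (b := 2 * a₁) (by linarith)
    have h1 := tendsto_pow_mul_exp_neg_mul 1 (b := 2 * a₁) (by linarith)
    have h := (((h3.const_mul (4 * K₁ ^ 2)).add (h2.const_mul (4 * K₁ * K₂))).add
      (h1.const_mul (K₂ ^ 2))).const_mul (2 * a / δ)
    simpa [hg] using h
  have hμtend : Tendsto (fun n : ℕ => μ n) atTop atTop := by
    have h := (tendsto_natCast_atTop_atTop (R := ℝ)).atTop_mul_const hπc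
    refine h.congr fun n => ?_
    simp only [hμ]
    ring
  have hg0 : Tendsto (fun n : ℕ => g (μ n)) atTop (nhds 0) := hgt.comp hμtend
  apply tendsto_of_tendsto_of_tendsto_of_le_of_le' tendsto_const_nhds hg0
  · filter_upwards with n
    apply div_nonneg
    · exact intervalIntegral.integral_nonneg ha.le (fun x _ => sq_nonneg _)
    · exact intervalIntegral.integral_nonneg ha.le (fun x _ => sq_nonneg _)
  · filter_upwards [eventually_ge_atTop 1] with n hn
    have hμn : 0 < μ n := lt_of_lt_of_le hπc (hμpos n hn)
    have hdpos : 0 < δ / (2 * μ n) := div_pos hδ (by linarith)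
    calc (∫ x in (0 : ℝ)..a,
            (-(deriv (deriv (ψ n)) x) + ((n : ℝ) * π / c) ^ 2 * ψ n x) ^ 2) /
          (∫ x in (0 : ℝ)..a, (ψ n x) ^ 2)
        ≤ (Real.exp (-(2 * a₁) * μ n) * (2 * μ n * K₁ + K₂) ^ 2 * a) / (δ / (2 * μ n)) :=
          div_le_div₀
            (mul_nonneg (mul_nonneg (Real.exp_pos _).le (sq_nonneg _)) ha.le)
            (hnum n) hdpos (hden n hn)
    _ = g (μ n) := by
        rw [hg]
        have hδ0 : δ ≠ 0 := hδ.ne'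
        have hμ0 : μ n ≠ 0 := hμn.ne'
        field_simp
        ring
end

section
/- Let V be a complex Hilbert space, let A, Φ₁, Φ₂ : V → V be bounded (continuous) linear operators, and let α > 0. Assume that for every u ∈ V: |⟨u, A u⟩| + |⟨u, A (Φ₁ u)⟩| ≥ α·‖u‖² and |⟨u, A u⟩| + |⟨Φ₂ u, A u⟩| ≥ α·‖u‖². Then A is a continuous isomorphism of V onto V; that is, A is bijective and its inverse is a bounded linear operator. -/
open scoped InnerProductSpace InnerProduct

/-!
Both estimates are coercivity estimates of the same shape
`α ‖u‖² ≤ ‖⟪u, T u⟫‖ + ‖⟪Φ u, T u⟫‖`: the second one for `T = A`, the first one, after moving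
`A` across the inner product, for `T = A†`. By Cauchy–Schwarz such an estimate bounds `T` from
below, so `A` has closed range and `A†` is injective; since `(range A)ᗮ = ker A†`, the range of
`A` is all of `V`, and the bounded inverse theorem makes `A` a continuous isomorphism.
-/

namespace ContinuousLinearMap

variable {𝕜 E F : Type*} [RCLike 𝕜]
  [NormedAddCommGroup E] [InnerProductSpace 𝕜 E] [NormedAddCommGroup F] [InnerProductSpace 𝕜 F]

theorem mul_norm_le_of_coercive_pair {T Φ : E →L[𝕜] E} {α : ℝ}
    (h : ∀ u, α * ‖u‖ ^ 2 ≤ ‖⟪u, T u⟫_𝕜‖ + ‖⟪Φ u, T u⟫_𝕜‖) (u : E) :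
    α * ‖u‖ ≤ (1 + ‖Φ‖) * ‖T u‖ := by
  have hsq : α * ‖u‖ * ‖u‖ ≤ (1 + ‖Φ‖) * ‖T u‖ * ‖u‖ :=
    calc α * ‖u‖ * ‖u‖ = α * ‖u‖ ^ 2 := by ring
      _ ≤ ‖⟪u, T u⟫_𝕜‖ + ‖⟪Φ u, T u⟫_𝕜‖ := h u
      _ ≤ ‖u‖ * ‖T u‖ + ‖Φ u‖ * ‖T u‖ := by gcongr <;> exact norm_inner_le_norm _ _
      _ ≤ ‖u‖ * ‖T u‖ + ‖Φ‖ * ‖u‖ * ‖T u‖ := by gcongr; exact Φ.le_opNorm u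
      _ = (1 + ‖Φ‖) * ‖T u‖ * ‖u‖ := by ring
  rcases (norm_nonneg u).eq_or_lt with hu | hu
  · rw [← hu, mul_zero]
    positivity
  · exact le_of_mul_le_mul_right hsq hu

theorem antilipschitz_of_coercive_pair {T Φ : E →L[𝕜] E} {α : ℝ} (hα : 0 < α)
    (h : ∀ u, α * ‖u‖ ^ 2 ≤ ‖⟪u, T u⟫_𝕜‖ + ‖⟪Φ u, T u⟫_𝕜‖) :
    AntilipschitzWith ((1 + ‖Φ‖) / α).toNNReal T :=
  T.antilipschitz_of_bound fun u => by
    rw [Real.coe_toNNReal _ (by positivity), div_mul_eq_mul_div, le_div_iff₀ hα, mul_comm]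
    exact mul_norm_le_of_coercive_pair h u

theorem coercive_pair_adjoint [CompleteSpace E] {A Φ : E →L[𝕜] E} {α : ℝ}
    (h : ∀ u, α * ‖u‖ ^ 2 ≤ ‖⟪u, A u⟫_𝕜‖ + ‖⟪u, A (Φ u)⟫_𝕜‖) (u : E) :
    α * ‖u‖ ^ 2 ≤ ‖⟪u, (A†) u⟫_𝕜‖ + ‖⟪Φ u, (A†) u⟫_𝕜‖ := by
  rw [norm_inner_symm u, adjoint_inner_left, norm_inner_symm (Φ u), adjoint_inner_left]
  exact h u

theorem _root_.AntilipschitzWith.surjective_of_injective_adjoint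
    [CompleteSpace E] [CompleteSpace F] {T : E →L[𝕜] F} {K : NNReal} (hT : AntilipschitzWith K T)
    (hT' : Function.Injective (T†)) :
    Function.Surjective T := by
  have hclosed : IsClosed (T.range : Set F) := hT.isClosed_range T.uniformContinuous
  have horth : T.rangeᗮ = ⊥ := by
    rw [orthogonal_range, LinearMap.ker_eq_bot_of_injective hT']
  rw [← coe_coe, ← LinearMap.range_eq_top, ← hclosed.submodule_topologicalClosure_eq,
    Submodule.topologicalClosure_eq_top_iff]
  exact horth

end ContinuousLinearMap

/-- Generalized Lax–Milgram theorem (bounded-operator version): if a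
bounded operator A on a complex Hilbert space V satisfies, for some bounded Φ₁, Φ₂ and
α > 0, the two coercivity-type estimates
|⟨u, Au⟩| + |⟨u, A(Φ₁u)⟩| ≥ α‖u‖² and |⟨u, Au⟩| + |⟨Φ₂u, Au⟩| ≥ α‖u‖²,
then A is a continuous isomorphism of V onto V. -/
theorem stmt_19 (V : Type*) [NormedAddCommGroup V] [InnerProductSpace ℂ V]
    [CompleteSpace V]
    (A Φ₁ Φ₂ : V →L[ℂ] V) (α : ℝ) (hα : 0 < α)
    (h1 : ∀ u : V, α * ‖u‖ ^ 2 ≤ ‖⟪u, A u⟫_ℂ‖ + ‖⟪u, A (Φ₁ u)⟫_ℂ‖)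
    (h2 : ∀ u : V, α * ‖u‖ ^ 2 ≤ ‖⟪u, A u⟫_ℂ‖ + ‖⟪Φ₂ u, A u⟫_ℂ‖) :
    Function.Bijective A ∧
      ∃ B : V →L[ℂ] V, (∀ v : V, B (A v) = v) ∧ (∀ v : V, A (B v) = v) := by
  have hA := ContinuousLinearMap.antilipschitz_of_coercive_pair hα h2
  have hA' := ContinuousLinearMap.antilipschitz_of_coercive_pair hα
    (ContinuousLinearMap.coercive_pair_adjoint h1)
  have hbij : Function.Bijective A :=
    ⟨hA.injective, hA.surjective_of_injective_adjoint hA'.injective⟩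
  let e := ContinuousLinearEquiv.ofBijective A (LinearMap.ker_eq_bot_of_injective hbij.1)
    (LinearMap.range_eq_top.mpr hbij.2)
  exact ⟨hbij, e.symm, e.symm_apply_apply, e.apply_symm_apply⟩
end
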